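/- arXiv:2302.14549 — 2 statements merged into one kernel-verified Lean document; each statement's English description precedes it below -/
import Mathlib

section
/- Let N be a complex antisymmetric 2-tensor on a 4-dimensional Lorentzian vector space satisfying N_{αβ}N^{β}{}_{γ} = −g_{αγ} and N_{αβ} conj(N)^{αβ} = 0. Define h_{μν} = N_{μ}{}^{α} conj(N)_{να}. Then h is real (h = conj(h)), symmetric (h_{μν} = h_{νμ}), and traceless (h^{μ}{}_{μ} = 0). -/
/-- Minkowski metric on ℝ⁴, signature (−,+,+,+); it is its own inverse. -/
def gMink (i j : Fin 4) : ℝ := if i = j then (if i = 0 then -1 else 1) else 0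

open Finset in
/-- `h_{μν} = N_μ{}^α conj(N)_{να}` (index raised with the Minkowski metric). -/
noncomputable def hTen (N : Fin 4 → Fin 4 → ℂ) (μ ν : Fin 4) : ℂ :=
  ∑ α : Fin 4, (∑ β : Fin 4, N μ β * (gMink β α : ℂ)) * starRingEnd ℂ (N ν α)

set_option maxHeartbeats 1600000 in
open Finset in
theorem stmt_9 (N : Fin 4 → Fin 4 → ℂ)
    (hanti : ∀ α β, N α β = - N β α)
    (hNN : ∀ α γ, ∑ β : Fin 4, ∑ δ : Fin 4, N α β * (gMink β δ : ℂ) * N δ γ = -(gMink α γ : ℂ))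
    (hNbarN : ∑ α : Fin 4, ∑ β : Fin 4, ∑ μ : Fin 4, ∑ ν : Fin 4,
      N α β * (gMink α μ : ℂ) * (gMink β ν : ℂ) * starRingEnd ℂ (N μ ν) = 0) :
    (∀ μ ν, hTen N μ ν = starRingEnd ℂ (hTen N μ ν)) ∧
    (∀ μ ν, hTen N μ ν = hTen N ν μ) ∧
    (∑ μ : Fin 4, ∑ ν : Fin 4, (gMink μ ν : ℂ) * hTen N μ ν = 0) := by
  have n00 : N 0 0 = 0 := by linear_combination (hanti 0 0) / 2
  have n11 : N 1 1 = 0 := by linear_combination (hanti 1 1) / 2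
  have n22 : N 2 2 = 0 := by linear_combination (hanti 2 2) / 2
  have n33 : N 3 3 = 0 := by linear_combination (hanti 3 3) / 2
  have n10 : N 1 0 = -N 0 1 := hanti 1 0
  have n20 : N 2 0 = -N 0 2 := hanti 2 0
  have n30 : N 3 0 = -N 0 3 := hanti 3 0
  have n21 : N 2 1 = -N 1 2 := hanti 2 1
  have n31 : N 3 1 = -N 1 3 := hanti 3 1
  have n32 : N 3 2 = -N 2 3 := hanti 3 2
  have e00 := hNN 0 0
  have e01 := hNN 0 1
  have e02 := hNN 0 2
  have e03 := hNN 0 3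
  have e11 := hNN 1 1
  have e12 := hNN 1 2
  have e13 := hNN 1 3
  have e22 := hNN 2 2
  have e23 := hNN 2 3
  have e33 := hNN 3 3
  simp [gMink, Fin.sum_univ_four, n00, n11, n22, n33, n10, n20, n30, n21, n31, n32] at e00 e01 e02 e03 e11 e12 e13 e22 e23 e33
  -- conjugation identity: conj (h μ ν) = h ν μ  (holds without any hypotheses)
  have hconj : ∀ μ ν : Fin 4, starRingEnd ℂ (hTen N μ ν) = hTen N ν μ := by
    intro μ ν
    fin_cases μ <;> fin_cases ν <;>
      (simp [hTen, gMink, Fin.sum_univ_four, n00, n11, n22, n33, n10, n20, n30, n21, n31, n32];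
       ring)
  -- self-dual / anti-self-dual products
  have Z12 : (N 0 1 + Complex.I * N 2 3) * (N 0 2 + Complex.I * N 1 3) = 0 := by
    linear_combination Complex.I * e03 + e12 + N 2 3 * N 1 3 * Complex.I_sq
  have Z13 : (N 0 1 + Complex.I * N 2 3) * (N 0 3 - Complex.I * N 1 2) = 0 := by
    linear_combination (-Complex.I) * e02 + e13 - N 1 2 * N 2 3 * Complex.I_sq
  have Z21 : (N 0 1 - Complex.I * N 2 3) * (N 0 2 - Complex.I * N 1 3) = 0 := by
    linear_combination (-Complex.I) * e03 + e12 + N 1 3 * N 2 3 * Complex.I_sq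
  have Z31 : (N 0 1 - Complex.I * N 2 3) * (N 0 3 + Complex.I * N 1 2) = 0 := by
    linear_combination Complex.I * e02 + e13 - N 1 2 * N 2 3 * Complex.I_sq
  have Z32 : (N 0 2 + Complex.I * N 1 3) * (N 0 3 + Complex.I * N 1 2) = 0 := by
    linear_combination (-Complex.I) * e01 + e23 + N 1 2 * N 1 3 * Complex.I_sq
  have Z23 : (N 0 2 - Complex.I * N 1 3) * (N 0 3 - Complex.I * N 1 2) = 0 := by
    linear_combination Complex.I * e01 + e23 + N 1 2 * N 1 3 * Complex.I_sq
  have S : (N 0 1 + Complex.I * N 2 3) * (N 0 1 - Complex.I * N 2 3)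
      + (N 0 2 - Complex.I * N 1 3) * (N 0 2 + Complex.I * N 1 3)
      + (N 0 3 + Complex.I * N 1 2) * (N 0 3 - Complex.I * N 1 2) = 0 := by
    linear_combination (-3/2 : ℂ) * e00 - (1/2 : ℂ) * e11 - (1/2 : ℂ) * e22 - (1/2 : ℂ) * e33 - (N 1 2 * N 1 2 + N 1 3 * N 1 3 + N 2 3 * N 2 3) * Complex.I_sq
  -- either the anti-self-dual part or the self-dual part of N vanishes
  have key : (N 0 1 = Complex.I * N 2 3 ∧ N 0 2 = -(Complex.I * N 1 3) ∧ N 0 3 = Complex.I * N 1 2)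
      ∨ (N 0 1 = -(Complex.I * N 2 3) ∧ N 0 2 = Complex.I * N 1 3 ∧ N 0 3 = -(Complex.I * N 1 2)) := by
    by_cases hp1 : N 0 1 + Complex.I * N 2 3 = 0
    · by_cases hp2 : N 0 2 - Complex.I * N 1 3 = 0
      · by_cases hp3 : N 0 3 + Complex.I * N 1 2 = 0
        · right
          exact ⟨by linear_combination hp1, by linear_combination hp2, by linear_combination hp3⟩
        · left
          have hq1 : N 0 1 - Complex.I * N 2 3 = 0 :=
            (mul_eq_zero.mp Z31).resolve_right hp3
          have hq2 : N 0 2 + Complex.I * N 1 3 = 0 :=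
            (mul_eq_zero.mp Z32).resolve_right hp3
          have hq3 : N 0 3 - Complex.I * N 1 2 = 0 := by
            have h3 : (N 0 3 + Complex.I * N 1 2) * (N 0 3 - Complex.I * N 1 2) = 0 := by
              linear_combination S - (N 0 1 - Complex.I * N 2 3) * hp1 - (N 0 2 + Complex.I * N 1 3) * hp2
            exact (mul_eq_zero.mp h3).resolve_left hp3
          exact ⟨by linear_combination hq1, by linear_combination hq2, by linear_combination hq3⟩
      · left
        have hq1 : N 0 1 - Complex.I * N 2 3 = 0 :=
          (mul_eq_zero.mp Z21).resolve_right hp2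
        have hq3 : N 0 3 - Complex.I * N 1 2 = 0 :=
          (mul_eq_zero.mp Z23).resolve_left hp2
        have hq2 : N 0 2 + Complex.I * N 1 3 = 0 := by
          have h2 : (N 0 2 - Complex.I * N 1 3) * (N 0 2 + Complex.I * N 1 3) = 0 := by
            linear_combination S - (N 0 1 - Complex.I * N 2 3) * hp1 - (N 0 3 + Complex.I * N 1 2) * hq3
          exact (mul_eq_zero.mp h2).resolve_left hp2
        exact ⟨by linear_combination hq1, by linear_combination hq2, by linear_combination hq3⟩
    · left
      have hq2 : N 0 2 + Complex.I * N 1 3 = 0 :=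
        (mul_eq_zero.mp Z12).resolve_left hp1
      have hq3 : N 0 3 - Complex.I * N 1 2 = 0 :=
        (mul_eq_zero.mp Z13).resolve_left hp1
      have hq1 : N 0 1 - Complex.I * N 2 3 = 0 := by
        have h1 : (N 0 1 + Complex.I * N 2 3) * (N 0 1 - Complex.I * N 2 3) = 0 := by
          linear_combination S - (N 0 2 - Complex.I * N 1 3) * hq2 - (N 0 3 + Complex.I * N 1 2) * hq3
        exact (mul_eq_zero.mp h1).resolve_left hp1
      exact ⟨by linear_combination hq1, by linear_combination hq2, by linear_combination hq3⟩
  -- expanded form of hTen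
  have hexp : ∀ μ ν : Fin 4, hTen N μ ν =
      -(N μ 0 * starRingEnd ℂ (N ν 0)) + N μ 1 * starRingEnd ℂ (N ν 1)
        + N μ 2 * starRingEnd ℂ (N ν 2) + N μ 3 * starRingEnd ℂ (N ν 3) := by
    intro μ ν
    simp [hTen, gMink, Fin.sum_univ_four]
    try ring
  -- symmetry
  have hsym : ∀ μ ν : Fin 4, hTen N μ ν = hTen N ν μ := by
    have step : ∀ i j : Fin 4, hTen N i j = hTen N j i := by
      have six : hTen N 0 1 = hTen N 1 0 ∧ hTen N 0 2 = hTen N 2 0 ∧ hTen N 0 3 = hTen N 3 0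
          ∧ hTen N 1 2 = hTen N 2 1 ∧ hTen N 1 3 = hTen N 3 1 ∧ hTen N 2 3 = hTen N 3 2 := by
        rcases key with ⟨ha, hb, hc⟩ | ⟨ha, hb, hc⟩ <;>
          refine ⟨?_, ?_, ?_, ?_, ?_, ?_⟩ <;>
            (simp only [hexp]
             simp only [n00, n11, n22, n33, n10, n20, n30, n21, n31, n32, ha, hb, hc,
               map_mul, map_neg, map_zero, Complex.conj_I]
             ring_nf
             try simp only [Complex.I_sq]
             try ring)
      obtain ⟨s01, s02, s03, s12, s13, s23⟩ := six
      intro i j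
      fin_cases i <;> fin_cases j <;>
        first
          | rfl
          | exact s01 | exact s01.symm | exact s02 | exact s02.symm
          | exact s03 | exact s03.symm | exact s12 | exact s12.symm
          | exact s13 | exact s13.symm | exact s23 | exact s23.symm
    exact step
  refine ⟨fun μ ν => by rw [hconj μ ν]; exact hsym μ ν, hsym, ?_⟩
  simp only [hexp, Fin.sum_univ_four]
  simp [gMink, Fin.sum_univ_four, n00, n11, n22, n33, n10, n20, n30, n21, n31, n32] at hNbarN ⊢
  linear_combination hNbarN
end

section
/- If a (0,4)-tensor R with Riemann symmetries on a 4-dimensional Lorentzian vector space satisfies (*R*) = −R, then its right dual is symmetric under pair exchange: R*_{αβγδ} = R*_{γδαβ}. -/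
/-- Levi-Civita symbol on four indices (Vandermonde formula, `eps 0 1 2 3 = 1`). -/
noncomputable def epsLC (a b c d : Fin 4) : ℝ :=
  ((b : ℝ) - a) * ((c : ℝ) - a) * ((d : ℝ) - a) * ((c : ℝ) - b) * ((d : ℝ) - b) *
    ((d : ℝ) - c) / 12

open Finset in
/-- `ε_{αβ}{}^{ab}`: Levi-Civita with last two indices raised. -/
noncomputable def epsUp2 (α β a b : Fin 4) : ℝ :=
  ∑ a' : Fin 4, ∑ b' : Fin 4, epsLC α β a' b' * gMink a' a * gMink b' b

open Finset in
/-- Left Hodge dual `(*R)_{αβcd} = (1/2) ε_{αβ}{}^{ab} R_{abcd}`. -/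
noncomputable def leftDual (M : Fin 4 → Fin 4 → Fin 4 → Fin 4 → ℝ) (α β c d : Fin 4) : ℝ :=
  (1 / 2) * ∑ a : Fin 4, ∑ b : Fin 4, epsUp2 α β a b * M a b c d

open Finset in
/-- Right Hodge dual `(R*)_{abγδ} = (1/2) R_{ab}{}^{cd} ε_{cdγδ}`. -/
noncomputable def rightDual (M : Fin 4 → Fin 4 → Fin 4 → Fin 4 → ℝ) (a b γ δ : Fin 4) : ℝ :=
  (1 / 2) * ∑ c : Fin 4, ∑ d : Fin 4,
    (∑ c' : Fin 4, ∑ d' : Fin 4, M a b c' d' * gMink c' c * gMink d' d) * epsLC c d γ δ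

lemma eps_pair' (a b c d : Fin 4) : epsLC a b c d = epsLC c d a b := by unfold epsLC; ring

lemma eps_anti' (a b c d : Fin 4) : epsLC a b c d = - epsLC a b d c := by unfold epsLC; ring

open Finset in
/-- Hodge dual of a 2-index tensor (2-form) with indices already down. -/
noncomputable def star2 (F : Fin 4 → Fin 4 → ℝ) (γ δ : Fin 4) : ℝ :=
  (1/2) * ∑ c : Fin 4, ∑ d : Fin 4, F c d * gMink c c * gMink d d * epsLC c d γ δ

lemma rd_eq (M : Fin 4 → Fin 4 → Fin 4 → Fin 4 → ℝ) (a b γ δ : Fin 4) :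
    rightDual M a b γ δ = star2 (M a b) γ δ := by
  simp [rightDual, star2, Fin.sum_univ_four, gMink]

open Finset in
lemma ld_eq (M : Fin 4 → Fin 4 → Fin 4 → Fin 4 → ℝ) (α β c d : Fin 4) :
    leftDual M α β c d =
      (1/2) * ∑ a : Fin 4, ∑ b : Fin 4, epsLC α β a b * gMink a a * gMink b b * M a b c d := by
  simp [leftDual, epsUp2, Fin.sum_univ_four, gMink]

lemma star2_anti (F : Fin 4 → Fin 4 → ℝ) (γ δ : Fin 4) : star2 F γ δ = - star2 F δ γ := by
  simp only [star2, Fin.sum_univ_four]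
  simp only [show ∀ c d : Fin 4, epsLC c d γ δ = - epsLC c d δ γ from
    fun c d => eps_anti' c d γ δ]
  ring

lemma v3 : ((3:Fin 4):ℝ) = 3 := by norm_num [show (3:Fin 4).val = 3 from rfl]

set_option maxHeartbeats 2000000 in
/-- In Lorentzian signature the double Hodge dual of a 2-form is minus the identity. -/
lemma starStarNeg (F : Fin 4 → Fin 4 → ℝ) (hF : ∀ c d, F c d = - F d c) (γ δ : Fin 4) :
    star2 (star2 F) γ δ = - F γ δ := by
  have h00 : F 0 0 = 0 := by have := hF 0 0; linarith
  have h11 : F 1 1 = 0 := by have := hF 1 1; linarith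
  have h22 : F 2 2 = 0 := by have := hF 2 2; linarith
  have h33 : F 3 3 = 0 := by have := hF 3 3; linarith
  have hG : ∀ c d, star2 F c d = - star2 F d c := fun c d => star2_anti F c d
  set G := star2 F with hGdef
  have g00 : G 0 0 = 0 := by have := hG 0 0; linarith
  have g11 : G 1 1 = 0 := by have := hG 1 1; linarith
  have g22 : G 2 2 = 0 := by have := hG 2 2; linarith
  have g33 : G 3 3 = 0 := by have := hG 3 3; linarith
  have e01 : G 0 1 = F 2 3 := by
    rw [hGdef]
    norm_num [star2, Fin.sum_univ_four, epsLC, gMink, v3, hF 3 2,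
      show ¬(3:Fin 4)=0 from by decide, show ¬(2:Fin 4)=0 from by decide,
      show ¬(1:Fin 4)=0 from by decide]
    ring
  have e02 : G 0 2 = - F 1 3 := by
    rw [hGdef]
    norm_num [star2, Fin.sum_univ_four, epsLC, gMink, v3, hF 3 1,
      show ¬(3:Fin 4)=0 from by decide, show ¬(2:Fin 4)=0 from by decide,
      show ¬(1:Fin 4)=0 from by decide]
    ring
  have e03 : G 0 3 = F 1 2 := by
    rw [hGdef]
    norm_num [star2, Fin.sum_univ_four, epsLC, gMink, v3, hF 2 1,
      show ¬(3:Fin 4)=0 from by decide, show ¬(2:Fin 4)=0 from by decide,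
      show ¬(1:Fin 4)=0 from by decide]
    ring
  have e12 : G 1 2 = - F 0 3 := by
    rw [hGdef]
    norm_num [star2, Fin.sum_univ_four, epsLC, gMink, v3, hF 3 0,
      show ¬(3:Fin 4)=0 from by decide, show ¬(2:Fin 4)=0 from by decide,
      show ¬(1:Fin 4)=0 from by decide]
    ring
  have e13 : G 1 3 = F 0 2 := by
    rw [hGdef]
    norm_num [star2, Fin.sum_univ_four, epsLC, gMink, v3, hF 2 0,
      show ¬(3:Fin 4)=0 from by decide, show ¬(2:Fin 4)=0 from by decide,
      show ¬(1:Fin 4)=0 from by decide]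
    ring
  have e23 : G 2 3 = - F 0 1 := by
    rw [hGdef]
    norm_num [star2, Fin.sum_univ_four, epsLC, gMink, v3, hF 1 0,
      show ¬(3:Fin 4)=0 from by decide, show ¬(2:Fin 4)=0 from by decide,
      show ¬(1:Fin 4)=0 from by decide]
    ring
  fin_cases γ <;> fin_cases δ <;>
    norm_num [star2, Fin.sum_univ_four, epsLC, gMink, v3,
      g00, g11, g22, g33, e01, e02, e03, e12, e13, e23,
      hG 1 0, hG 2 0, hG 3 0, hG 2 1, hG 3 1, hG 3 2,
      hF 1 0, hF 2 0, hF 3 0, hF 2 1, hF 3 1, hF 3 2, h00, h11, h22, h33,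
      show ¬(3:Fin 4)=0 from by decide, show ¬(2:Fin 4)=0 from by decide,
      show ¬(1:Fin 4)=0 from by decide,
      show ∀ h, (⟨0, h⟩ : Fin 4) = 0 from fun _ => rfl,
      show ∀ h, (⟨1, h⟩ : Fin 4) = 1 from fun _ => rfl,
      show ∀ h, (⟨2, h⟩ : Fin 4) = 2 from fun _ => rfl,
      show ∀ h, (⟨3, h⟩ : Fin 4) = 3 from fun _ => rfl] <;>
    (try rfl) <;> (try ring)
set_option maxHeartbeats 4000000 in
open Finset in
theorem stmt_13 (R : Fin 4 → Fin 4 → Fin 4 → Fin 4 → ℝ)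
    (hanti1 : ∀ a b c d, R a b c d = - R b a c d)
    (hanti2 : ∀ a b c d, R a b c d = - R a b d c)
    (hpair : ∀ a b c d, R a b c d = R c d a b)
    (hbianchi : ∀ a b c d, R a b c d + R a c d b + R a d b c = 0)
    (hdd : ∀ α β γ δ, rightDual (leftDual R) α β γ δ = - R α β γ δ) :
    ∀ α β γ δ, rightDual R α β γ δ = rightDual R γ δ α β := by
  -- step 1: the right dual equals the left dual with pairs swapped
  have lemA : ∀ α β γ δ, rightDual R α β γ δ = leftDual R γ δ α β := by
    intro α β γ δ
    rw [rd_eq, ld_eq]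
    simp only [star2, Fin.sum_univ_four]
    simp only [show ∀ x y : Fin 4, R x y α β = R α β x y from fun x y => hpair x y α β]
    simp only [show ∀ x y : Fin 4, epsLC γ δ x y = epsLC x y γ δ from
      fun x y => eps_pair' γ δ x y]
    ring
  -- step 2: double right dual is minus the identity
  have rr : ∀ (M : Fin 4 → Fin 4 → Fin 4 → Fin 4 → ℝ),
      (∀ a b c d, M a b c d = - M a b d c) →
      ∀ α β γ δ, rightDual (rightDual M) α β γ δ = - M α β γ δ := by
    intro M hM α β γ δ
    rw [rd_eq]
    have : rightDual M α β = star2 (M α β) := by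
      funext c d; exact rd_eq M α β c d
    rw [this]
    exact starStarNeg (M α β) (hM α β) γ δ
  -- the left dual of R is antisymmetric in its last two indices
  have hLanti : ∀ a b c d, leftDual R a b c d = - leftDual R a b d c := by
    intro a b c d
    simp only [leftDual]
    simp only [show ∀ x y : Fin 4, R x y c d = - R x y d c from fun x y => hanti2 x y c d]
    simp only [Fin.sum_univ_four]
    ring
  -- the right dual of R is antisymmetric in its last two indices
  have hRanti : ∀ a b c d, rightDual R a b c d = - rightDual R a b d c := by
    intro a b c d
    rw [rd_eq, rd_eq]
    exact star2_anti (R a b) c d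
  -- rightDual (leftDual R) = rightDual (rightDual R), so applying rightDual once more:
  have hfun : rightDual (leftDual R) = rightDual (rightDual R) := by
    funext a b c d
    rw [hdd a b c d, rr R hanti2 a b c d]
  have key : ∀ α β γ δ, leftDual R α β γ δ = rightDual R α β γ δ := by
    intro α β γ δ
    have h1 : rightDual (rightDual (leftDual R)) α β γ δ = - leftDual R α β γ δ :=
      rr (leftDual R) hLanti α β γ δ
    have h2 : rightDual (rightDual (rightDual R)) α β γ δ = - rightDual R α β γ δ :=
      rr (rightDual R) hRanti α β γ δ
    rw [hfun] at h1
    rw [h2] at h1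
    linarith
  intro α β γ δ
  rw [lemA α β γ δ, key γ δ α β]
end
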